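/- arXiv:0907.4225 — 2 statements merged into one kernel-verified Lean document; each statement's English description precedes it below -/
import Mathlib

section
/- Let ω₀, c ∈ ℝ with ω₀ > 0 and c < 0, and let g : ℝ → ℂ be a smooth function with g(0) = 0 and g′(0) = 0. Define Ψ : ℝ⁴ → ℂ by Ψ(θ,t,τ,r) = −r·θ·ω₀ − τ·r·c + r·g(τ) + i·t·(1 − exp(iθ)) − τ. Then the point p = (0, −ω₀/c, 0, −1/c) is a stationary point of Ψ (all four first-order partial derivatives vanish at p), and the determinant of the 4×4 complex Hessian matrix of second-order partial derivatives of Ψ at p (in the variables θ, t, τ, r) equals c². -/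
open Complex

/-- Partial derivative of a function of 4 real variables (indexed by `Fin 4`),
with values in ℂ, in the `i`-th variable. -/
noncomputable def partialDeriv4 (f : (Fin 4 → ℝ) → ℂ) (i : Fin 4) :
    (Fin 4 → ℝ) → ℂ :=
  fun x => deriv (fun s => f (Function.update x i s)) (x i)

/-- Lemma 3.2: the phase
Ψ(θ,t,τ,r) = −rθω₀ − τrc + r·g(τ) + it(1 − e^{iθ}) − τ, where g vanishes to second
order at 0, has the stationary point p = (0, −ω₀/c, 0, −1/c), and the determinant of
its 4×4 complex Hessian at p equals c². -/
theorem stmt1 (ω₀ c : ℝ) (hω₀ : 0 < ω₀) (hc : c < 0)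
    (g : ℝ → ℂ) (hg : ContDiff ℝ (⊤ : ℕ∞) g) (hg0 : g 0 = 0) (hg1 : deriv g 0 = 0)
    (Ψ : (Fin 4 → ℝ) → ℂ)
    (hΨ : ∀ x : Fin 4 → ℝ, Ψ x =
      -((x 3 * x 0 * ω₀ : ℝ) : ℂ) - ((x 2 * x 3 * c : ℝ) : ℂ)
        + ((x 3 : ℝ) : ℂ) * g (x 2)
        + Complex.I * ((x 1 : ℝ) : ℂ) * (1 - Complex.exp (Complex.I * ((x 0 : ℝ) : ℂ)))
        - ((x 2 : ℝ) : ℂ)) :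
    (∀ i : Fin 4, partialDeriv4 Ψ i ![0, -ω₀ / c, 0, -1 / c] = 0) ∧
      Matrix.det
        (Matrix.of fun i j : Fin 4 =>
          partialDeriv4 (partialDeriv4 Ψ j) i ![0, -ω₀ / c, 0, -1 / c])
        = (c : ℂ) ^ 2 := by
  have hcne : c ≠ 0 := ne_of_lt hc
  have hcC : (c : ℂ) ≠ 0 := by exact_mod_cast hcne
  have hgd : Differentiable ℝ g := hg.differentiable (by simp)
  have hgd' : Differentiable ℝ (deriv g) := by
    have h : ContDiff ℝ ((⊤ : ℕ∞) : WithTop ℕ∞) g := hg.of_le (by simp)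
    exact (contDiff_infty_iff_deriv.mp h).2.differentiable (by simp)
  have hre : ∀ x : ℝ, HasDerivAt (fun s : ℝ => (s : ℂ)) 1 x := fun x =>
    (hasDerivAt_id (x : ℂ)).comp_ofReal
  have hexp : ∀ x : ℝ, HasDerivAt (fun s : ℝ => Complex.exp (Complex.I * s))
      (Complex.I * Complex.exp (Complex.I * x)) x := by
    intro x
    have h := (Complex.hasDerivAt_exp (Complex.I * x)).comp (x : ℂ)
      ((hasDerivAt_id (x : ℂ)).const_mul Complex.I)
    have h' : HasDerivAt (fun z : ℂ => Complex.exp (Complex.I * z))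
        (Complex.exp (Complex.I * x) * (Complex.I * 1)) (x : ℂ) := h
    have h'' : HasDerivAt (fun z : ℂ => Complex.exp (Complex.I * z))
        (Complex.I * Complex.exp (Complex.I * x)) (x : ℂ) := by
      simpa [mul_comm] using h'
    exact h''.comp_ofReal
  set p : Fin 4 → ℝ := ![0, -ω₀ / c, 0, -1 / c] with hp
  have hp0 : p 0 = 0 := rfl
  have hp1 : p 1 = -ω₀ / c := rfl
  have hp2 : p 2 = 0 := rfl
  have hp3 : p 3 = -1 / c := rfl
  -- First partial derivatives
  have hD0 : partialDeriv4 Ψ 0 = fun x : Fin 4 → ℝ =>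
      -((x 3 : ℂ) * ω₀) + (x 1 : ℂ) * Complex.exp (Complex.I * x 0) := by
    funext x
    simp only [partialDeriv4]
    have hfun : (fun s : ℝ => Ψ (Function.update x 0 s)) = fun s : ℝ =>
        -((x 3 : ℂ) * s * ω₀) - ((x 2 : ℂ) * (x 3 : ℂ) * c) + (x 3 : ℂ) * g (x 2)
          + Complex.I * (x 1 : ℂ) * (1 - Complex.exp (Complex.I * s)) - (x 2 : ℂ) := by
      funext s
      rw [hΨ]
      simp [Function.update]
    rw [hfun]
    have H : HasDerivAt (fun s : ℝ =>
        -((x 3 : ℂ) * s * ω₀) - ((x 2 : ℂ) * (x 3 : ℂ) * c) + (x 3 : ℂ) * g (x 2)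
          + Complex.I * (x 1 : ℂ) * (1 - Complex.exp (Complex.I * s)) - (x 2 : ℂ))
        (-((x 3 : ℂ) * 1 * ω₀) + Complex.I * (x 1 : ℂ)
          * (0 - Complex.I * Complex.exp (Complex.I * (x 0)))) (x 0) :=
      (((((((hre (x 0)).const_mul ((x 3 : ℝ) : ℂ)).mul_const ((ω₀ : ℝ) : ℂ)).neg).sub_const
        _).add_const _).add
          (((hasDerivAt_const (x 0) (1 : ℂ)).sub (hexp (x 0))).const_mul
            (Complex.I * (x 1 : ℂ)))).sub_const _
    rw [H.deriv]
    linear_combination (-((x 1 : ℝ) : ℂ) * Complex.exp (Complex.I * ((x 0 : ℝ) : ℂ)))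
      * Complex.I_sq
  have hD1 : partialDeriv4 Ψ 1 = fun x : Fin 4 → ℝ =>
      Complex.I * (1 - Complex.exp (Complex.I * x 0)) := by
    funext x
    simp only [partialDeriv4]
    have hfun : (fun s : ℝ => Ψ (Function.update x 1 s)) = fun s : ℝ =>
        (-((x 3 : ℂ) * (x 0 : ℂ) * ω₀) - ((x 2 : ℂ) * (x 3 : ℂ) * c) + (x 3 : ℂ) * g (x 2))
          + Complex.I * (s : ℂ) * (1 - Complex.exp (Complex.I * (x 0 : ℂ))) - (x 2 : ℂ) := by
      funext s
      rw [hΨ]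
      simp [Function.update]
    rw [hfun]
    have H : HasDerivAt (fun s : ℝ =>
        (-((x 3 : ℂ) * (x 0 : ℂ) * ω₀) - ((x 2 : ℂ) * (x 3 : ℂ) * c) + (x 3 : ℂ) * g (x 2))
          + Complex.I * (s : ℂ) * (1 - Complex.exp (Complex.I * (x 0 : ℂ))) - (x 2 : ℂ))
        (0 + Complex.I * 1 * (1 - Complex.exp (Complex.I * (x 0 : ℂ)))) (x 1) := by
      refine HasDerivAt.sub_const (c := ((x 2 : ℝ) : ℂ)) ?_
      refine (hasDerivAt_const (x 1) _).add ?_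
      exact (((hre (x 1)).const_mul Complex.I).mul_const _)
    rw [H.deriv]
    ring
  have hD2 : partialDeriv4 Ψ 2 = fun x : Fin 4 → ℝ =>
      -((x 3 : ℂ) * c) + (x 3 : ℂ) * deriv g (x 2) - 1 := by
    funext x
    simp only [partialDeriv4]
    have hfun : (fun s : ℝ => Ψ (Function.update x 2 s)) = fun s : ℝ =>
        -((x 3 : ℂ) * (x 0 : ℂ) * ω₀) - ((s : ℂ) * (x 3 : ℂ) * c) + (x 3 : ℂ) * g s
          + Complex.I * (x 1 : ℂ) * (1 - Complex.exp (Complex.I * (x 0 : ℂ))) - (s : ℂ) := by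
      funext s
      rw [hΨ]
      simp [Function.update]
    rw [hfun]
    have H : HasDerivAt (fun s : ℝ =>
        -((x 3 : ℂ) * (x 0 : ℂ) * ω₀) - ((s : ℂ) * (x 3 : ℂ) * c) + (x 3 : ℂ) * g s
          + Complex.I * (x 1 : ℂ) * (1 - Complex.exp (Complex.I * (x 0 : ℂ))) - (s : ℂ))
        (0 - 1 * (x 3 : ℂ) * c + (x 3 : ℂ) * deriv g (x 2) + 0 - 1) (x 2) := by
      refine HasDerivAt.sub ?_ (hre (x 2))
      refine HasDerivAt.add ?_ (hasDerivAt_const _ _)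
      refine HasDerivAt.add ?_ (((hgd (x 2)).hasDerivAt).const_mul ((x 3 : ℝ) : ℂ))
      refine HasDerivAt.sub (hasDerivAt_const _ _) ?_
      exact ((hre (x 2)).mul_const ((x 3 : ℝ) : ℂ)).mul_const ((c : ℝ) : ℂ)
    rw [H.deriv]
    ring
  have hD3 : partialDeriv4 Ψ 3 = fun x : Fin 4 → ℝ =>
      -((x 0 : ℂ) * ω₀) - ((x 2 : ℂ) * c) + g (x 2) := by
    funext x
    simp only [partialDeriv4]
    have hfun : (fun s : ℝ => Ψ (Function.update x 3 s)) = fun s : ℝ =>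
        -((s : ℂ) * (x 0 : ℂ) * ω₀) - ((x 2 : ℂ) * (s : ℂ) * c) + (s : ℂ) * g (x 2)
          + Complex.I * (x 1 : ℂ) * (1 - Complex.exp (Complex.I * (x 0 : ℂ))) - (x 2 : ℂ) := by
      funext s
      rw [hΨ]
      simp [Function.update]
    rw [hfun]
    have H : HasDerivAt (fun s : ℝ =>
        -((s : ℂ) * (x 0 : ℂ) * ω₀) - ((x 2 : ℂ) * (s : ℂ) * c) + (s : ℂ) * g (x 2)
          + Complex.I * (x 1 : ℂ) * (1 - Complex.exp (Complex.I * (x 0 : ℂ))) - (x 2 : ℂ))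
        (-(1 * (x 0 : ℂ) * ω₀) - (x 2 : ℂ) * 1 * c + 1 * g (x 2) + 0 - 0) (x 3) := by
      refine HasDerivAt.sub ?_ (hasDerivAt_const _ _)
      refine HasDerivAt.add ?_ (hasDerivAt_const _ _)
      refine HasDerivAt.add ?_ ((hre (x 3)).mul_const (g (x 2)))
      refine HasDerivAt.sub ?_ ?_
      · exact (((hre (x 3)).mul_const ((x 0 : ℝ) : ℂ)).mul_const ((ω₀ : ℝ) : ℂ)).neg
      · exact ((hre (x 3)).const_mul ((x 2 : ℝ) : ℂ)).mul_const ((c : ℝ) : ℂ)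
    rw [H.deriv]
    ring
  have hune : ∀ (i j : Fin 4), j ≠ i → ∀ (x : Fin 4 → ℝ) (s : ℝ),
      Function.update x i s j = x j := fun i j h x s => Function.update_of_ne h s x
  -- Second partial derivatives: hE i j is ∂ᵢ∂ⱼΨ
  have hE00 : partialDeriv4 (partialDeriv4 Ψ 0) 0 = fun x : Fin 4 → ℝ =>
      (x 1 : ℂ) * (Complex.I * Complex.exp (Complex.I * x 0)) := by
    rw [hD0]; funext x
    simp only [partialDeriv4, Function.update_self, hune 0 1 (by decide),
      hune 0 3 (by decide)]
    have H : HasDerivAt (fun s : ℝ => -((x 3 : ℂ) * ω₀)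
        + (x 1 : ℂ) * Complex.exp (Complex.I * (s : ℂ)))
        (0 + (x 1 : ℂ) * (Complex.I * Complex.exp (Complex.I * (x 0 : ℂ)))) (x 0) :=
      (hasDerivAt_const _ _).add ((hexp (x 0)).const_mul ((x 1 : ℝ) : ℂ))
    rw [H.deriv]; ring
  have hE10 : partialDeriv4 (partialDeriv4 Ψ 0) 1 = fun x : Fin 4 → ℝ =>
      Complex.exp (Complex.I * x 0) := by
    rw [hD0]; funext x
    simp only [partialDeriv4, Function.update_self, hune 1 0 (by decide),
      hune 1 3 (by decide)]
    have H : HasDerivAt (fun s : ℝ => -((x 3 : ℂ) * ω₀)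
        + (s : ℂ) * Complex.exp (Complex.I * (x 0 : ℂ)))
        (0 + 1 * Complex.exp (Complex.I * (x 0 : ℂ))) (x 1) :=
      (hasDerivAt_const _ _).add ((hre (x 1)).mul_const _)
    rw [H.deriv]; ring
  have hE20 : partialDeriv4 (partialDeriv4 Ψ 0) 2 = fun _ => (0 : ℂ) := by
    rw [hD0]; funext x
    simp only [partialDeriv4, Function.update_self, hune 2 0 (by decide),
      hune 2 1 (by decide), hune 2 3 (by decide)]
    exact deriv_const _ _
  have hE30 : partialDeriv4 (partialDeriv4 Ψ 0) 3 = fun _ => -((ω₀ : ℝ) : ℂ) := by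
    rw [hD0]; funext x
    simp only [partialDeriv4, Function.update_self, hune 3 0 (by decide),
      hune 3 1 (by decide)]
    have H : HasDerivAt (fun s : ℝ => -((s : ℂ) * ω₀)
        + (x 1 : ℂ) * Complex.exp (Complex.I * (x 0 : ℂ)))
        (-(1 * ((ω₀ : ℝ) : ℂ))) (x 3) :=
      (((hre (x 3)).mul_const ((ω₀ : ℝ) : ℂ)).neg).add_const _
    rw [H.deriv]; ring
  have hE01 : partialDeriv4 (partialDeriv4 Ψ 1) 0 = fun x : Fin 4 → ℝ =>
      Complex.exp (Complex.I * x 0) := by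
    rw [hD1]; funext x
    simp only [partialDeriv4, Function.update_self]
    have H : HasDerivAt (fun s : ℝ => Complex.I * (1 - Complex.exp (Complex.I * (s : ℂ))))
        (Complex.I * (0 - Complex.I * Complex.exp (Complex.I * (x 0 : ℂ)))) (x 0) :=
      ((hasDerivAt_const (x 0) (1 : ℂ)).sub (hexp (x 0))).const_mul Complex.I
    rw [H.deriv]
    linear_combination (-Complex.exp (Complex.I * ((x 0 : ℝ) : ℂ))) * Complex.I_sq
  have hE11 : partialDeriv4 (partialDeriv4 Ψ 1) 1 = fun _ => (0 : ℂ) := by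
    rw [hD1]; funext x
    simp only [partialDeriv4, Function.update_self, hune 1 0 (by decide)]
    exact deriv_const _ _
  have hE21 : partialDeriv4 (partialDeriv4 Ψ 1) 2 = fun _ => (0 : ℂ) := by
    rw [hD1]; funext x
    simp only [partialDeriv4, Function.update_self, hune 2 0 (by decide)]
    exact deriv_const _ _
  have hE31 : partialDeriv4 (partialDeriv4 Ψ 1) 3 = fun _ => (0 : ℂ) := by
    rw [hD1]; funext x
    simp only [partialDeriv4, Function.update_self, hune 3 0 (by decide)]
    exact deriv_const _ _
  have hE02 : partialDeriv4 (partialDeriv4 Ψ 2) 0 = fun _ => (0 : ℂ) := by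
    rw [hD2]; funext x
    simp only [partialDeriv4, Function.update_self, hune 0 2 (by decide),
      hune 0 3 (by decide)]
    exact deriv_const _ _
  have hE12 : partialDeriv4 (partialDeriv4 Ψ 2) 1 = fun _ => (0 : ℂ) := by
    rw [hD2]; funext x
    simp only [partialDeriv4, Function.update_self, hune 1 2 (by decide),
      hune 1 3 (by decide)]
    exact deriv_const _ _
  have hE22 : partialDeriv4 (partialDeriv4 Ψ 2) 2 = fun x : Fin 4 → ℝ =>
      (x 3 : ℂ) * deriv (deriv g) (x 2) := by
    rw [hD2]; funext x
    simp only [partialDeriv4, Function.update_self, hune 2 3 (by decide)]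
    have H : HasDerivAt (fun s : ℝ => -((x 3 : ℂ) * c) + (x 3 : ℂ) * deriv g s - 1)
        (0 + (x 3 : ℂ) * deriv (deriv g) (x 2)) (x 2) :=
      ((hasDerivAt_const _ _).add (((hgd' (x 2)).hasDerivAt).const_mul
        ((x 3 : ℝ) : ℂ))).sub_const 1
    rw [H.deriv]; ring
  have hE32 : partialDeriv4 (partialDeriv4 Ψ 2) 3 = fun x : Fin 4 → ℝ =>
      -((c : ℝ) : ℂ) + deriv g (x 2) := by
    rw [hD2]; funext x
    simp only [partialDeriv4, Function.update_self, hune 3 2 (by decide)]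
    have H : HasDerivAt (fun s : ℝ => -((s : ℂ) * c) + (s : ℂ) * deriv g (x 2) - 1)
        (-(1 * ((c : ℝ) : ℂ)) + 1 * deriv g (x 2)) (x 3) :=
      ((((hre (x 3)).mul_const ((c : ℝ) : ℂ)).neg).add
        ((hre (x 3)).mul_const (deriv g (x 2)))).sub_const 1
    rw [H.deriv]; ring
  have hE03 : partialDeriv4 (partialDeriv4 Ψ 3) 0 = fun _ => -((ω₀ : ℝ) : ℂ) := by
    rw [hD3]; funext x
    simp only [partialDeriv4, Function.update_self, hune 0 2 (by decide)]
    have H : HasDerivAt (fun s : ℝ => -((s : ℂ) * ω₀) - ((x 2 : ℂ) * c) + g (x 2))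
        (-(1 * ((ω₀ : ℝ) : ℂ))) (x 0) :=
      ((((hre (x 0)).mul_const ((ω₀ : ℝ) : ℂ)).neg).sub_const _).add_const _
    rw [H.deriv]; ring
  have hE13 : partialDeriv4 (partialDeriv4 Ψ 3) 1 = fun _ => (0 : ℂ) := by
    rw [hD3]; funext x
    simp only [partialDeriv4, Function.update_self, hune 1 0 (by decide),
      hune 1 2 (by decide)]
    exact deriv_const _ _
  have hE23 : partialDeriv4 (partialDeriv4 Ψ 3) 2 = fun x : Fin 4 → ℝ =>
      -((c : ℝ) : ℂ) + deriv g (x 2) := by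
    rw [hD3]; funext x
    simp only [partialDeriv4, Function.update_self, hune 2 0 (by decide)]
    have H : HasDerivAt (fun s : ℝ => -((x 0 : ℂ) * ω₀) - ((s : ℂ) * c) + g s)
        (0 - 1 * ((c : ℝ) : ℂ) + deriv g (x 2)) (x 2) :=
      ((hasDerivAt_const (x 2) _).sub ((hre (x 2)).mul_const ((c : ℝ) : ℂ))).add
        ((hgd (x 2)).hasDerivAt)
    rw [H.deriv]; ring
  have hE33 : partialDeriv4 (partialDeriv4 Ψ 3) 3 = fun _ => (0 : ℂ) := by
    rw [hD3]; funext x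
    simp only [partialDeriv4, Function.update_self, hune 3 0 (by decide),
      hune 3 2 (by decide)]
    exact deriv_const _ _
  constructor
  · have s0 : partialDeriv4 Ψ 0 p = 0 := by
      rw [hD0]
      show -((p 3 : ℂ) * ω₀) + (p 1 : ℂ) * Complex.exp (Complex.I * (p 0 : ℂ)) = 0
      rw [hp0, hp1, hp3]
      push_cast
      simp only [ofReal_zero, mul_zero, Complex.exp_zero, mul_one]
      field_simp
      ring
    have s1 : partialDeriv4 Ψ 1 p = 0 := by
      rw [hD1]
      show Complex.I * (1 - Complex.exp (Complex.I * (p 0 : ℂ))) = 0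
      rw [hp0]
      simp
    have s2 : partialDeriv4 Ψ 2 p = 0 := by
      rw [hD2]
      show -((p 3 : ℂ) * c) + (p 3 : ℂ) * deriv g (p 2) - 1 = 0
      rw [hp2, hp3, hg1]
      push_cast
      field_simp
      ring
    have s3 : partialDeriv4 Ψ 3 p = 0 := by
      rw [hD3]
      show -((p 0 : ℂ) * ω₀) - ((p 2 : ℂ) * c) + g (p 2) = 0
      rw [hp0, hp2, hg0]
      simp
    intro i; fin_cases i
    · exact s0
    · exact s1
    · exact s2
    · exact s3
  · have hM : (Matrix.of fun i j : Fin 4 =>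
        partialDeriv4 (partialDeriv4 Ψ j) i p) =
        !![((-ω₀ / c : ℝ) : ℂ) * Complex.I, 1, 0, -((ω₀ : ℝ) : ℂ);
           1, 0, 0, 0;
           0, 0, ((-1 / c : ℝ) : ℂ) * deriv (deriv g) 0, -((c : ℝ) : ℂ);
           -((ω₀ : ℝ) : ℂ), 0, -((c : ℝ) : ℂ), 0] := by
      ext i j
      fin_cases i <;> fin_cases j <;>
        simp [hE00, hE10, hE20, hE30, hE01, hE11, hE21, hE31,
          hE02, hE12, hE22, hE32, hE03, hE13, hE23, hE33, hp0, hp1, hp2, hp3, hg1,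
          Matrix.vecHead, Matrix.vecTail]
    rw [hM]
    have hdet : Matrix.det
        !![((-ω₀ / c : ℝ) : ℂ) * Complex.I, 1, 0, -((ω₀ : ℝ) : ℂ);
           1, 0, 0, 0;
           0, 0, ((-1 / c : ℝ) : ℂ) * deriv (deriv g) 0, -((c : ℝ) : ℂ);
           -((ω₀ : ℝ) : ℂ), 0, -((c : ℝ) : ℂ), 0]
        = (-((c : ℝ) : ℂ)) * (-((c : ℝ) : ℂ)) := by
      simp [Matrix.det_succ_row_zero, Fin.sum_univ_succ,
        show ((1 : Fin 4).succAbove 2) = 3 from rfl]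
    rw [hdet]
    ring
end

section
/- Let n ∈ ℕ, let A be an n×n complex unitary matrix such that I − A is invertible, and let f > 0 be a real number. Then ∫_{ℂⁿ} exp(f⁻¹·ψ₂(Au, u)) du = fⁿ · πⁿ / det(I − A), where ψ₂(Au,u) = i·Im⟨u, Au⟩ − ½‖Au − u‖² and the integral is with respect to Lebesgue measure on ℂⁿ ≅ ℝ^{2n}. -/
/-!
For unitary `A` one has `‖Au‖ = ‖u‖`, so `ψ₂(Au, u) = -⟪u, (1 - A) u⟫` and the integrand is a
complex Gaussian. The matrix `K = (1 - A)⁻¹` satisfies `K + Kᴴ = 1`, so `i (2K - 1)` is Hermitian;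
diagonalizing it by a unitary `V` diagonalizes `1 - A = K⁻¹` as `V diag(μ) Vᴴ` with `Re μⱼ > 0`.
The unitary change of variables `u ↦ V u` then splits the integral into `n` two-dimensional
Gaussians `∫_ℂ exp(-μⱼ |z|² / f) dz = π f / μⱼ`, whose product is `fⁿ πⁿ / det(1 - A)`.
-/

open MeasureTheory Complex

/-- Lebesgue (Borel) measurable structure on ℂⁿ ≅ ℝ^{2n}. -/
noncomputable instance (n : ℕ) : MeasurableSpace (EuclideanSpace ℂ (Fin n)) :=
  MeasurableSpace.comap WithLp.ofLp MeasurableSpace.pi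

instance (n : ℕ) : BorelSpace (EuclideanSpace ℂ (Fin n)) := PiLp.borelSpace _

open Matrix Unitary

theorem I_mul_im_inner_sub_half_norm_sub_sq {E : Type*} [NormedAddCommGroup E]
    [InnerProductSpace ℂ E] {a b : E} (h : ‖a‖ = ‖b‖) :
    I * ((inner ℂ b a).im : ℂ) - (1 / 2 : ℂ) * ((‖a - b‖ ^ 2 : ℝ) : ℂ) = -inner ℂ b (b - a) := by
  have hsq : ‖a - b‖ ^ 2 = 2 * ‖b‖ ^ 2 - 2 * (inner ℂ b a).re := by
    rw [@norm_sub_sq ℂ, h, ← inner_re_symm, RCLike.re_to_complex]; ring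
  rw [inner_sub_right, inner_self_eq_norm_sq_to_K, hsq]
  apply Complex.ext <;> simp
  ring

section UnitaryMatrix

variable {ι : Type*} [Fintype ι] [DecidableEq ι]

theorem Matrix.norm_toEuclideanLin_of_mem_unitaryGroup {𝕜 : Type*} [RCLike 𝕜] {A : Matrix ι ι 𝕜}
    (hA : A ∈ unitaryGroup ι 𝕜) (u : EuclideanSpace 𝕜 ι) : ‖toEuclideanLin A u‖ = ‖u‖ :=
  ContinuousLinearMap.norm_map_of_mem_unitary
    (Unitary.map_mem (toEuclideanCLM (n := ι) (𝕜 := 𝕜)) hA) u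

theorem Matrix.inv_one_sub_add_star_inv_one_sub {A : Matrix ι ι ℂ}
    (hA : A ∈ unitaryGroup ι ℂ) (hinv : IsUnit (1 - A)) :
    (1 - A)⁻¹ + star (1 - A)⁻¹ = 1 := by
  have hdet : IsUnit (1 - A).det := (isUnit_iff_isUnit_det _).mp hinv
  have hstar : star (1 - A)⁻¹ = -((1 - A)⁻¹ * A) := by
    rw [star_eq_conjTranspose, conjTranspose_nonsing_inv]
    apply inv_eq_left_inv
    calc -((1 - A)⁻¹ * A) * (1 - A)ᴴ = (1 - A)⁻¹ * ((1 - A) + (A * star A - 1)) := by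
          rw [conjTranspose_sub, conjTranspose_one, ← star_eq_conjTranspose]; noncomm_ring
      _ = 1 := by rw [mem_unitaryGroup_iff.mp hA, sub_self, add_zero, nonsing_inv_mul _ hdet]
  rw [hstar, ← sub_eq_add_neg, ← mul_one_sub, nonsing_inv_mul _ hdet]

theorem Matrix.map_diagonal_inv {𝕜 F : Type*} [Field 𝕜] [FunLike F (Matrix ι ι 𝕜) (Matrix ι ι 𝕜)]
    [RingHomClass F (Matrix ι ι 𝕜) (Matrix ι ι 𝕜)] (e : F) {κ : ι → 𝕜} (hκ : ∀ j, κ j ≠ 0) :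
    (e (diagonal κ))⁻¹ = e (diagonal κ⁻¹) := by
  apply inv_eq_left_inv
  rw [← map_mul, diagonal_mul_diagonal]
  simp [inv_mul_cancel₀ (hκ _)]

theorem Matrix.exists_one_sub_eq_conjStarAlgAut_diagonal {A : Matrix ι ι ℂ}
    (hA : A ∈ unitaryGroup ι ℂ) (hinv : IsUnit (1 - A)) :
    ∃ (V : unitaryGroup ι ℂ) (μ : ι → ℂ), (∀ j, 0 < (μ j).re) ∧
      1 - A = conjStarAlgAut ℂ _ V (diagonal μ) := by
  set K := (1 - A)⁻¹
  have hKstar : star K = 1 - K := eq_sub_of_add_eq' (inv_one_sub_add_star_inv_one_sub hA hinv)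
  have hH : (I • (2 • K - 1)).IsHermitian := by
    rw [IsHermitian, ← star_eq_conjTranspose, star_smul, star_sub, star_nsmul, hKstar, star_one]
    simp only [Complex.star_def, conj_I]
    module
  obtain ⟨V, d, hHd⟩ : ∃ (V : unitaryGroup ι ℂ) (d : ι → ℝ),
      I • (2 • K - 1) = conjStarAlgAut ℂ _ V (diagonal (ofReal ∘ d)) :=
    ⟨_, _, hH.spectral_theorem⟩
  have hK : K = conjStarAlgAut ℂ _ V (diagonal fun j => (1 - I * d j) / 2) := by
    have hdiag : diagonal (fun j => (1 - I * d j) / 2) =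
        (1 / 2 : ℂ) • (1 - I • diagonal (ofReal ∘ d)) := by
      ext i j; by_cases h : i = j <;> simp [h]; ring
    rw [hdiag, map_smul, map_sub, map_one, map_smul, ← hHd, smul_smul, I_mul_I]
    module
  have hκ : ∀ j, (1 - I * d j) / 2 ≠ 0 := fun j h => by
    simpa using congrArg Complex.re h
  refine ⟨V, fun j => ((1 - I * d j) / 2)⁻¹, fun j => ?_, ?_⟩
  · rw [inv_re]
    exact div_pos (by simp) (normSq_pos.mpr (hκ j))
  · rw [← nonsing_inv_nonsing_inv (1 - A) ((isUnit_iff_isUnit_det _).mp hinv)]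
    change K⁻¹ = _
    rw [hK, map_diagonal_inv _ hκ]
    rfl

end UnitaryMatrix

section GaussianIntegral

theorem EuclideanSpace.integral_cexp_neg_sum_mul_norm_sq {ι : Type*} [Fintype ι] {c : ι → ℂ}
    (hc : ∀ j, 0 < (c j).re) :
    ∫ u : EuclideanSpace ℂ ι, cexp (-∑ j, c j * (‖u j‖ : ℂ) ^ 2) = ∏ j, (Real.pi : ℂ) / c j := by
  let B := Pi.orthonormalBasis fun _ : ι => Complex.orthonormalBasisOneI
  let G : EuclideanSpace ℝ ((_ : ι) × Fin 2) → ℂ := fun x => cexp (-∑ p, c p.1 * (x p : ℂ) ^ 2)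
  have hG : ∀ u, cexp (-∑ j, c j * (‖u j‖ : ℂ) ^ 2) = G (B.repr u) := by
    intro u
    simp only [G, Fintype.sum_sigma, Fin.sum_univ_two]
    congr 2
    refine Finset.sum_congr rfl fun j _ => ?_
    have hre : B.repr u ⟨j, 0⟩ = (u j).re := rfl
    have him : B.repr u ⟨j, 1⟩ = (u j).im := rfl
    rw [hre, him, ← mul_add, ← ofReal_pow, Complex.sq_norm, normSq_apply]
    push_cast; ring
  calc ∫ u : EuclideanSpace ℂ ι, cexp (-∑ j, c j * (‖u j‖ : ℂ) ^ 2)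
      = ∫ x, G x := by
        simp only [hG]
        exact B.measurePreserving_repr.integral_comp B.repr.toHomeomorph.measurableEmbedding G
    _ = ∫ v : (_ : ι) × Fin 2 → ℝ, G (WithLp.toLp 2 v) :=
        ((PiLp.volume_preserving_toLp _).integral_comp
          (MeasurableEquiv.toLp 2 _).measurableEmbedding G).symm
    _ = ∏ p : (_ : ι) × Fin 2, ((Real.pi : ℂ) / c p.1) ^ (1 / 2 : ℂ) := by
        simpa [G] using GaussianFourier.integral_cexp_neg_sum_mul_add
          (b := fun p : (_ : ι) × Fin 2 => c p.1) (fun p => hc p.1) 0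
    _ = ∏ j, (Real.pi : ℂ) / c j := by
        simp [Fintype.prod_sigma, cpow_ofNat_inv_pow]

variable {ι : Type*} [Fintype ι] [DecidableEq ι]

theorem Matrix.inner_toEuclideanLin_diagonal_self (μ : ι → ℂ) (u : EuclideanSpace ℂ ι) :
    inner ℂ u (toEuclideanLin (diagonal μ) u) = ∑ j, μ j * (‖u j‖ : ℂ) ^ 2 := by
  simp only [PiLp.inner_apply, toLpLin_apply, mulVec_diagonal, RCLike.inner_apply, ← conj_mul']
  exact Finset.sum_congr rfl fun j _ => by ring

theorem Matrix.integral_comp_inner_toEuclideanLin_conjStarAlgAut {E : Type*}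
    [NormedAddCommGroup E] [NormedSpace ℝ E] (V : unitaryGroup ι ℂ) (M : Matrix ι ι ℂ)
    (F : ℂ → E) :
    ∫ u : EuclideanSpace ℂ ι, F (inner ℂ u (toEuclideanLin (conjStarAlgAut ℂ _ V M) u)) =
      ∫ u : EuclideanSpace ℂ ι, F (inner ℂ u (toEuclideanLin M u)) := by
  let e : EuclideanSpace ℂ ι ≃ₗᵢ[ℂ] EuclideanSpace ℂ ι :=
    Unitary.linearIsometryEquiv ⟨toEuclideanCLM (n := ι) (𝕜 := ℂ) V, Unitary.map_mem _ V.2⟩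
  let eℝ : EuclideanSpace ℂ ι ≃ₗᵢ[ℝ] EuclideanSpace ℂ ι :=
    { e.toLinearEquiv.restrictScalars ℝ with norm_map' := e.norm_map }
  have hconj : ∀ u, toEuclideanLin (conjStarAlgAut ℂ _ V M) (e u) = e (toEuclideanLin M u) := by
    intro u
    change toEuclideanLin _ (toEuclideanLin (V : Matrix ι ι ℂ) u) =
      toEuclideanLin (V : Matrix ι ι ℂ) _
    simp only [toLpLin_apply, mulVec_mulVec, conjStarAlgAut_apply, mul_assoc,
      Unitary.coe_star_mul_self, mul_one]
  rw [← eℝ.measurePreserving.integral_comp eℝ.toHomeomorph.measurableEmbedding]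
  refine integral_congr_ae (Filter.Eventually.of_forall fun u => congrArg F ?_)
  exact (congrArg (inner ℂ (e u)) (hconj u)).trans (e.inner_map_map _ _)

theorem Matrix.integral_cexp_neg_inner_toEuclideanLin_conjStarAlgAut_diagonal
    (V : unitaryGroup ι ℂ) {μ : ι → ℂ} (hμ : ∀ j, 0 < (μ j).re) :
    ∫ u : EuclideanSpace ℂ ι,
        cexp (-inner ℂ u (toEuclideanLin (conjStarAlgAut ℂ _ V (diagonal μ)) u)) =
      ∏ j, (Real.pi : ℂ) / μ j := by
  rw [integral_comp_inner_toEuclideanLin_conjStarAlgAut V _ (fun z => cexp (-z))]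
  simp_rw [inner_toEuclideanLin_diagonal_self]
  exact EuclideanSpace.integral_cexp_neg_sum_mul_norm_sq hμ

end GaussianIntegral

/-- for a unitary n×n complex matrix A with I − A invertible and f > 0,
∫_{ℂⁿ} exp(f⁻¹·ψ₂(Au,u)) du = fⁿ·πⁿ / det(I − A), with
ψ₂(Au,u) = i·Im⟨u,Au⟩ − ½‖Au−u‖². -/
theorem stmt3 (n : ℕ) (A : Matrix (Fin n) (Fin n) ℂ)
    (hA : A ∈ Matrix.unitaryGroup (Fin n) ℂ) (hinv : IsUnit (1 - A))
    (f : ℝ) (hf : 0 < f) :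
    ∫ u : EuclideanSpace ℂ (Fin n),
        Complex.exp (((f : ℂ))⁻¹ *
          (Complex.I * (((inner ℂ u (Matrix.toEuclideanLin A u) : ℂ)).im : ℂ)
            - (1 / 2 : ℂ) * ((‖Matrix.toEuclideanLin A u - u‖ ^ 2 : ℝ) : ℂ)))
      = (f : ℂ) ^ n * ((Real.pi : ℂ)) ^ n / (1 - A).det := by
  obtain ⟨V, μ, hμ, h1A⟩ := exists_one_sub_eq_conjStarAlgAut_diagonal hA hinv
  have hμf : ∀ j, 0 < ((f : ℂ)⁻¹ * μ j).re := fun j => by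
    rw [← ofReal_inv, re_ofReal_mul]; exact mul_pos (inv_pos.mpr hf) (hμ j)
  have hscale : conjStarAlgAut ℂ _ V (diagonal fun j => (f : ℂ)⁻¹ * μ j) = (f : ℂ)⁻¹ • (1 - A) := by
    rw [h1A, ← map_smul, ← diagonal_smul]; rfl
  have hψ : ∀ u : EuclideanSpace ℂ (Fin n),
      (f : ℂ)⁻¹ * (I * ((inner ℂ u (toEuclideanLin A u)).im : ℂ)
        - (1 / 2 : ℂ) * ((‖toEuclideanLin A u - u‖ ^ 2 : ℝ) : ℂ)) =
      -inner ℂ u (toEuclideanLin (conjStarAlgAut ℂ _ V (diagonal fun j => (f : ℂ)⁻¹ * μ j)) u) := by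
    intro u
    rw [I_mul_im_inner_sub_half_norm_sub_sq (norm_toEuclideanLin_of_mem_unitaryGroup hA u), hscale,
      map_smul, LinearMap.smul_apply, inner_smul_right, map_sub, LinearMap.sub_apply, toLpLin_one,
      LinearMap.id_apply]
    ring
  simp_rw [hψ, integral_cexp_neg_inner_toEuclideanLin_conjStarAlgAut_diagonal V hμf]
  rw [h1A, det_map', det_diagonal, Finset.prod_div_distrib, Finset.prod_mul_distrib]
  simp only [Finset.prod_const, Finset.card_univ, Fintype.card_fin, inv_pow]
  field_simp
end
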